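/- arXiv:2507.12286 — 3 statements merged into one kernel-verified Lean document; each statement's English description precedes it below -/
import Mathlib

section
/- Let L be a first-order language and M an L-structure. Suppose there is an increasing chain S₀ ⊆ S₁ ⊆ S₂ ⊆ … of substructures of M, each with finite underlying set, whose union is all of M, and such that for every i, every L-homomorphism from Sᵢ into M is an L-embedding. Then M is a core, i.e., every endomorphism of M is an embedding. -/
open FirstOrder

/-- If a first-order structure `M` is the union of an increasing chain of finite
substructures, each of which admits only embeddings into `M`, then `M` is a core:
every endomorphism of `M` is an embedding. -/
theorem core_cover_implies_core
    {L : Language} {M : Type*} [L.Structure M]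
    (S : ℕ → L.Substructure M)
    (hchain : ∀ i, S i ≤ S (i + 1))
    (hfin : ∀ i, (S i : Set M).Finite)
    (hunion : ∀ x : M, ∃ i, x ∈ S i)
    (hemb : ∀ (i : ℕ) (f : (S i) →[L] M), ∃ g : (S i) ↪[L] M, ⇑g = ⇑f) :
    ∀ f : M →[L] M, ∃ g : M ↪[L] M, ⇑g = ⇑f := by
  have hmono : Monotone S := monotone_nat_of_le_succ hchain
  intro f
  have hcommon : ∀ {n : ℕ} (x : Fin n → M), ∃ i, ∀ j, x j ∈ S i := by
    intro n x
    choose k hk using fun j => hunion (x j)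
    exact ⟨Finset.univ.sup k, fun j =>
      hmono (Finset.le_sup (Finset.mem_univ j)) (hk j)⟩
  have hinj : Function.Injective f := by
    intro a b hab
    obtain ⟨ia, ha⟩ := hunion a
    obtain ⟨ib, hb⟩ := hunion b
    have ha' : a ∈ S (max ia ib) := hmono (le_max_left _ _) ha
    have hb' : b ∈ S (max ia ib) := hmono (le_max_right _ _) hb
    obtain ⟨g, hg⟩ := hemb (max ia ib) (f.comp (S (max ia ib)).subtype.toHom)
    have : g ⟨a, ha'⟩ = g ⟨b, hb'⟩ := by
      simp [hg, Language.Hom.comp_apply, hab]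
    exact congrArg Subtype.val (g.injective this)
  have hrel : ∀ {n : ℕ} (r : L.Relations n) (x : Fin n → M),
      Language.Structure.RelMap r (f ∘ x) → Language.Structure.RelMap r x := by
    intro n r x hx
    obtain ⟨i, hi⟩ := hcommon x
    obtain ⟨g, hg⟩ := hemb i (f.comp (S i).subtype.toHom)
    set x' : Fin n → S i := fun j => ⟨x j, hi j⟩ with hx'def
    have h1 : g ∘ x' = f ∘ x := by
      funext j; simp [hg, hx'def]
    have h2 := g.map_rel r x'
    rw [h1] at h2
    have hx' : Language.Structure.RelMap r x' := h2.mp hx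
    have h3 := (S i).subtype.map_rel r x'
    have h5 := h3.mpr hx'
    rwa [show ⇑(S i).subtype ∘ x' = x from funext fun j => rfl] at h5
  refine ⟨⟨⟨f, hinj⟩, fun {n} F x => f.map_fun F x, fun {n} r x => ⟨hrel r x, f.map_rel r x⟩⟩, rfl⟩
end

section
/- Let L be a first-order language, let M and N be L-structures, and let f : M → N and g : N → M be L-homomorphisms. Assume that every endomorphism of M is an isomorphism (M is a strong core) and that every endomorphism of N is an embedding (N is a core). Then g is an L-isomorphism from N onto M and f is an L-embedding of M into N; in particular, M and N are isomorphic. -/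
open FirstOrder

/-- If `M` is a strong core (every endomorphism is an isomorphism), `N` is a core
(every endomorphism is an embedding), and there are homomorphisms `f : M → N` and
`g : N → M`, then `g` is an isomorphism of `N` onto `M`, `f` is an embedding of `M`
into `N`, and in particular `M ≅ N`. -/
theorem strong_core_core_homs_iso
    {L : Language} {M N : Type*} [L.Structure M] [L.Structure N]
    (f : M →[L] N) (g : N →[L] M)
    (hM : ∀ h : M →[L] M, ∃ e : M ≃[L] M, ⇑e = ⇑h)
    (hN : ∀ h : N →[L] N, ∃ e : N ↪[L] N, ⇑e = ⇑h) :
    (∃ e : N ≃[L] M, ⇑e = ⇑g) ∧ (∃ e : M ↪[L] N, ⇑e = ⇑f) ∧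
      Nonempty (M ≃[L] N) := by
  obtain ⟨e, he⟩ := hM (g.comp f)
  obtain ⟨j, hj⟩ := hN (f.comp g)
  have hgf : ∀ x, g (f x) = e x := fun x => (congrFun he x).symm
  have hfg : ∀ x, f (g x) = j x := fun x => (congrFun hj x).symm
  have ginj : Function.Injective g := by
    intro a b hab
    have : j a = j b := by rw [← hfg, ← hfg, hab]
    exact j.injective this
  have gsurj : Function.Surjective g := fun x =>
    ⟨f (e.symm x), by rw [hgf, e.apply_symm_apply]⟩
  have grel : ∀ {n} (r : L.Relations n) (x : Fin n → N),
      Language.Structure.RelMap r (g ∘ x) ↔ Language.Structure.RelMap r x := by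
    intro n r x
    constructor
    · intro h
      have := f.map_rel r (g ∘ x) h
      have hx : f ∘ (g ∘ x) = j ∘ x := by funext i; exact hfg (x i)
      rw [hx] at this
      exact (j.map_rel' r x).mp this
    · exact g.map_rel r x
  let gequiv : N ≃[L] M :=
    { toEquiv := Equiv.ofBijective g ⟨ginj, gsurj⟩
      map_fun' := fun φ x => g.map_fun φ x
      map_rel' := fun r x => grel r x }
  have finj : Function.Injective f := by
    intro a b hab
    apply e.injective
    rw [← hgf, ← hgf, hab]
  have frel : ∀ {n} (r : L.Relations n) (x : Fin n → M),
      Language.Structure.RelMap r (f ∘ x) ↔ Language.Structure.RelMap r x := by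
    intro n r x
    constructor
    · intro h
      have := g.map_rel r (f ∘ x) h
      have hx : g ∘ (f ∘ x) = e ∘ x := by funext i; exact hgf (x i)
      rw [hx] at this
      exact (e.map_rel' r x).mp this
    · exact f.map_rel r x
  let femb : M ↪[L] N :=
    { toEmbedding := ⟨f, finj⟩
      map_fun' := fun φ x => f.map_fun φ x
      map_rel' := fun r x => frel r x }
  exact ⟨⟨gequiv, funext fun _ => rfl⟩, ⟨femb, funext fun _ => rfl⟩, ⟨gequiv.symm⟩⟩
end

section
/- Fix sets C (concept names) and R (role names) and an arbitrary ternary relation ent on P(C) × P(R) × P(C). A 2-type is a triple t = (t₁,t₂,t₃) ∈ P(C) × P(R) × P(C); a 1½-type is a pair u = (u₁,u₂) ∈ P(R) × P(C). Let F be a set of 2-types such that all members of F have the same first component. Call a set U of 1½-types a good successor configuration for F if: (R1) whenever M ⊆ t₁ for some t ∈ F, ent(M,R,N) holds, and for every t ∈ F it is not the case that both R ⊆ t₂ and N ⊆ t₃, then there exists u ∈ U with R ⊆ u₁ and N ⊆ u₂; (R2) for every u ∈ U there exist t ∈ F and M ⊆ t₁ with ent(M,u₁,u₂); (R3) there do not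 exist distinct u, u' ∈ U with u₁ ⊆ u'₁ and u₂ ⊆ u'₂; and (R4) for every u ∈ U and every t ∈ F it is not the case that both u₁ ⊆ t₂ and u₂ ⊆ t₃. Then any two good successor configurations for F are equal. -/
/-- `U` is a good successor configuration for a set `F` of 2-types, with respect to
an abstract entailment relation `ent`, if it satisfies rules (R1)–(R4). -/
def IsGoodSuccConfig {C R : Type*} (ent : Set C → Set R → Set C → Prop)
    (F : Set (Set C × Set R × Set C)) (U : Set (Set R × Set C)) : Prop :=
  -- (R1)
  (∀ (M : Set C) (Rs : Set R) (N : Set C),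
      (∃ t ∈ F, M ⊆ t.1) → ent M Rs N →
      (∀ t ∈ F, ¬ (Rs ⊆ t.2.1 ∧ N ⊆ t.2.2)) →
      ∃ u ∈ U, Rs ⊆ u.1 ∧ N ⊆ u.2) ∧
  -- (R2)
  (∀ u ∈ U, ∃ t ∈ F, ∃ M ⊆ t.1, ent M u.1 u.2) ∧
  -- (R3)
  (∀ u ∈ U, ∀ u' ∈ U, u ≠ u' → ¬ (u.1 ⊆ u'.1 ∧ u.2 ⊆ u'.2)) ∧
  -- (R4)
  (∀ u ∈ U, ∀ t ∈ F, ¬ (u.1 ⊆ t.2.1 ∧ u.2 ⊆ t.2.2))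

/-- Uniqueness of the good successor configuration: if all members of `F` share the
same first component, then any two good successor configurations for `F` coincide. -/
theorem goodSuccConfig_unique {C R : Type*} (ent : Set C → Set R → Set C → Prop)
    (F : Set (Set C × Set R × Set C))
    (hF : ∀ t ∈ F, ∀ t' ∈ F, t.1 = t'.1)
    (U U' : Set (Set R × Set C))
    (hU : IsGoodSuccConfig ent F U) (hU' : IsGoodSuccConfig ent F U') :
    U = U' := by
  clear hF
  have key : ∀ (V W : Set (Set R × Set C)),
      IsGoodSuccConfig ent F V → IsGoodSuccConfig ent F W → V ⊆ W := by
    intro V W hV hW u hu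
    obtain ⟨hV1, hV2, hV3, hV4⟩ := hV
    obtain ⟨hW1, hW2, hW3, hW4⟩ := hW
    -- from R2 of V: some t, M with ent M u.1 u.2
    obtain ⟨t, ht, M, hM, hent⟩ := hV2 u hu
    -- R1 of W using R4 of V
    obtain ⟨v, hv, hv1, hv2⟩ := hW1 M u.1 u.2 ⟨t, ht, hM⟩ hent
      (fun t' ht' h => hV4 u hu t' ht' h)
    -- from R2 of W applied to v, then R1 of V using R4 of W
    obtain ⟨t', ht', M', hM', hent'⟩ := hW2 v hv
    obtain ⟨w, hw, hw1, hw2⟩ := hV1 M' v.1 v.2 ⟨t', ht', hM'⟩ hent'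
      (fun t'' ht'' h => hW4 v hv t'' ht'' h)
    -- u ⊆ w in both components; R3 of V forces u = w
    have huw : u = w := by
      by_contra hne
      exact hV3 u hu w hw hne ⟨hv1.trans hw1, hv2.trans hw2⟩
    have h1 : u.1 = v.1 := Set.Subset.antisymm hv1 (huw ▸ hw1)
    have h2 : u.2 = v.2 := Set.Subset.antisymm hv2 (huw ▸ hw2)
    have : u = v := Prod.ext h1 h2
    rwa [this]
  exact Set.Subset.antisymm (key U U' hU hU') (key U' U hU' hU)
end
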